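/- Combining the above: under the μ-PL condition and the one-step recursion Δ_{t+1} ≤ (1 − μη)Δ_t + 32η²ℓrdβ²L⁴, if η ≤ min{1/(ℓr), με/(64ℓrdβ²L⁴)} and t ≥ (1/(μη)) log(2Δ_0/ε), then Δ_t ≤ ε. -/

import Mathlib

/-- Theorem 1, Convergence of ZO optimization: if the nonnegative expected
suboptimality gaps `Δ_t` of the smoothed objective satisfy the one-step recursion
`Δ_{t+1} ≤ (1 − μη)Δ_t + 32 η² ℓ r d β² L⁴`, with stepsize
`η ≤ min{1/(ℓr), με/(64 ℓ r d β² L⁴)}` (and `μη ≤ 1`, implicit in the analysis), then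
`Δ_t ≤ ε` for every `t ≥ (1/(μη)) log(2Δ_0/ε)`. -/
theorem zo_convergence
    (d : ℕ) (Δ : ℕ → ℝ) (μ η ℓ r β L ε : ℝ)
    (hd : 0 < d) (hμ : 0 < μ) (hη : 0 < η) (hℓ : 0 < ℓ) (hr : 0 < r)
    (hβ : 0 < β) (hL : 0 < L) (hε : 0 < ε) (hμη : μ * η ≤ 1)
    (hnn : ∀ t, 0 ≤ Δ t)
    (hrec : ∀ t, Δ (t + 1) ≤ (1 - μ * η) * Δ t + 32 * η ^ 2 * ℓ * r * d * β ^ 2 * L ^ 4)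
    (hstep : η ≤ min (1 / (ℓ * r)) (μ * ε / (64 * ℓ * r * d * β ^ 2 * L ^ 4))) :
    ∀ t : ℕ, (1 / (μ * η)) * Real.log (2 * Δ 0 / ε) ≤ t → Δ t ≤ ε := by
  have hμηpos : 0 < μ * η := mul_pos hμ hη
  have hd' : (0:ℝ) < d := Nat.cast_pos.mpr hd
  have hden : (0:ℝ) < 64 * ℓ * r * d * β ^ 2 * L ^ 4 := by positivity
  have hη2 : η ≤ μ * ε / (64 * ℓ * r * d * β ^ 2 * L ^ 4) :=
    le_trans hstep (min_le_right _ _)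
  -- noise bound : c ≤ μηε/2
  have hc : 32 * η ^ 2 * ℓ * r * d * β ^ 2 * L ^ 4 ≤ μ * η * ε / 2 := by
    have h' : η * (64 * ℓ * r * d * β ^ 2 * L ^ 4) ≤ μ * ε :=
      (le_div_iff₀ hden).mp hη2
    calc 32 * η ^ 2 * ℓ * r * d * β ^ 2 * L ^ 4
        = η * (η * (64 * ℓ * r * d * β ^ 2 * L ^ 4)) / 2 := by ring
      _ ≤ η * (μ * ε) / 2 := by
          gcongr
      _ = μ * η * ε / 2 := by ring
  have h1 : 0 ≤ 1 - μ * η := by linarith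
  -- main induction
  have key : ∀ t : ℕ, Δ t ≤ (1 - μ * η) ^ t * Δ 0 + ε / 2 := by
    intro t
    induction t with
    | zero => simp; positivity
    | succ n ih =>
        calc Δ (n + 1) ≤ (1 - μ * η) * Δ n + 32 * η ^ 2 * ℓ * r * d * β ^ 2 * L ^ 4 :=
              hrec n
          _ ≤ (1 - μ * η) * ((1 - μ * η) ^ n * Δ 0 + ε / 2) + μ * η * ε / 2 := by
              have := mul_le_mul_of_nonneg_left ih h1
              linarith
          _ = (1 - μ * η) ^ (n + 1) * Δ 0 + ε / 2 := by ring
  intro t ht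
  have hexp : (1 - μ * η) ^ t ≤ Real.exp (-(μ * η * t)) := by
    have h2 : 1 - μ * η ≤ Real.exp (-(μ * η)) := by
      have := Real.add_one_le_exp (-(μ * η)); linarith
    calc (1 - μ * η) ^ t ≤ (Real.exp (-(μ * η))) ^ t := pow_le_pow_left₀ h1 h2 t
      _ = Real.exp (-(μ * η * t)) := by rw [← Real.exp_nat_mul]; ring_nf
  by_cases hΔ0 : Δ 0 ≤ ε / 2
  · have hpow : (1 - μ * η) ^ t ≤ 1 := pow_le_one₀ h1 (by linarith)
    have := key t
    nlinarith [hnn 0, mul_le_mul_of_nonneg_right hpow (hnn 0)]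
  · push_neg at hΔ0
    have hΔ0pos : 0 < Δ 0 := lt_trans (by positivity) hΔ0
    have hquot : (0:ℝ) < 2 * Δ 0 / ε := by positivity
    have hlog : Real.log (2 * Δ 0 / ε) ≤ μ * η * t := by
      have h := mul_le_mul_of_nonneg_left ht hμηpos.le
      have heq : μ * η * (1 / (μ * η) * Real.log (2 * Δ 0 / ε)) = Real.log (2 * Δ 0 / ε) := by
        field_simp
      linarith [heq ▸ h]
    have : Real.exp (-(μ * η * t)) ≤ ε / (2 * Δ 0) := by
      rw [show ε / (2 * Δ 0) = (2 * Δ 0 / ε)⁻¹ by field_simp]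
      rw [← Real.exp_log hquot, ← Real.exp_neg]
      exact Real.exp_le_exp.mpr (by linarith)
    have hfin : (1 - μ * η) ^ t * Δ 0 ≤ ε / 2 := by
      have h := mul_le_mul_of_nonneg_right (le_trans hexp this) hΔ0pos.le
      have heq : ε / (2 * Δ 0) * Δ 0 = ε / 2 := by field_simp
      linarith [heq ▸ h]
    linarith [key t]
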